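/- arXiv:2506.04926 — 3 statements merged into one kernel-verified Lean document; each statement's English description precedes it below -/
import Mathlib

section
/- For any integers c ≥ 1 and n ≥ 0, the sum over p from 0 to floor(n/c) of the binomial coefficient C(n - p*c + p, p) equals the n-th generalized Fibonacci number G_n^c, where G_0^c = ... = G_{c-1}^c = 1 and G_n^c = G_{n-1}^c + G_{n-c}^c for n ≥ c. -/
/-!
Write `c = d + 1`. For `p * c ≤ n` the summand is `C(n - p d, p)`, which vanishes as soon as
`p * c > n`, so the sum may be taken over any long enough range of `p`. Over a common range,
Pascal's rule `C(m + 1, p + 1) = C(m, p + 1) + C(m, p)` splits the sum for `n` into the sums for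
`n - 1` and `n - c`: both sides satisfy the same recurrence with the same initial values `1`.
-/

open Finset

theorem eq_of_eq_on_lt_of_add_rec {α : Type*} [Add α] {c : ℕ} (hc : 1 ≤ c) {F G : ℕ → α}
    (hinit : ∀ i < c, F i = G i) (hF : ∀ n, c ≤ n → F n = F (n - 1) + F (n - c))
    (hG : ∀ n, c ≤ n → G n = G (n - 1) + G (n - c)) : F = G := by
  funext n
  induction n using Nat.strong_induction_on with
  | _ n ih =>
    rcases lt_or_ge n c with hn | hn
    · exact hinit n hn
    · rw [hF n hn, hG n hn, ih (n - 1) (by omega), ih (n - c) (by omega)]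

namespace Nat

theorem choose_sub_mul_eq_zero {n p d : ℕ} (h : n < p * (d + 1)) : (n - p * d).choose p = 0 := by
  have hp : 0 < p := Nat.pos_of_ne_zero (by rintro rfl; simp at h)
  exact choose_eq_zero_of_lt (by rw [mul_add_one] at h; omega)

theorem choose_sub_mul_succ {n p d : ℕ} (h : d + 1 ≤ n) :
    (n - (p + 1) * d).choose (p + 1) =
      (n - 1 - (p + 1) * d).choose (p + 1) + (n - (d + 1) - p * d).choose p := by
  have hpd : (p + 1) * d = p * d + d := add_one_mul p d
  rcases lt_or_ge ((p + 1) * d) n with hlt | hge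
  · obtain ⟨m, hm⟩ : ∃ m, n - (p + 1) * d = m + 1 := ⟨n - 1 - (p + 1) * d, by omega⟩
    rw [hm, choose_succ_succ', add_comm,
      show n - 1 - (p + 1) * d = m by omega, show n - (d + 1) - p * d = m by omega]
  · have hp : p ≠ 0 := by rintro rfl; omega
    rw [choose_sub_mul_eq_zero, choose_sub_mul_eq_zero, choose_sub_mul_eq_zero] <;>
      rw [mul_add_one] <;> omega

def fibChooseSum (d n : ℕ) : ℕ :=
  ∑ p ∈ range (n / (d + 1) + 1), (n - p * d).choose p

theorem fibChooseSum_eq_sum_range {d n N : ℕ} (h : n / (d + 1) < N) :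
    fibChooseSum d n = ∑ p ∈ range N, (n - p * d).choose p := by
  refine sum_subset (range_subset_range.mpr h) fun p _ hp => choose_sub_mul_eq_zero ?_
  rw [mem_range, not_lt, Nat.add_one_le_iff, Nat.div_lt_iff_lt_mul d.succ_pos] at hp
  exact hp

theorem fibChooseSum_of_lt {d n : ℕ} (h : n < d + 1) : fibChooseSum d n = 1 := by
  simp [fibChooseSum, Nat.div_eq_of_lt h]

theorem fibChooseSum_rec {d n : ℕ} (h : d + 1 ≤ n) :
    fibChooseSum d n = fibChooseSum d (n - 1) + fibChooseSum d (n - (d + 1)) := by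
  rw [fibChooseSum_eq_sum_range (N := n + 1) (by have := div_le_self n (d + 1); omega),
    fibChooseSum_eq_sum_range (N := n + 1) (by have := div_le_self (n - 1) (d + 1); omega),
    fibChooseSum_eq_sum_range (N := n) (by have := div_le_self (n - (d + 1)) (d + 1); omega),
    sum_range_succ', sum_range_succ' _ n]
  simp only [choose_sub_mul_succ h, sum_add_distrib, zero_mul, Nat.sub_zero, choose_zero_right]
  ring

end Nat

/-- Harris–Styles: the sum over `p` from `0` to `⌊n/c⌋` of `C(n - p*c + p, p)` equals the
`n`-th generalized Fibonacci number with parameter `c`. -/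
theorem sum_choose_eq_generalizedFibonacci (c : ℕ) (hc : 1 ≤ c) (G : ℕ → ℕ)
    (hinit : ∀ i < c, G i = 1)
    (hrec : ∀ n, c ≤ n → G n = G (n - 1) + G (n - c)) (n : ℕ) :
    ∑ p ∈ Finset.range (n / c + 1), Nat.choose (n - p * c + p) p = G n := by
  obtain ⟨d, rfl⟩ : ∃ d, c = d + 1 := ⟨c - 1, by omega⟩
  have hsum : ∑ p ∈ Finset.range (n / (d + 1) + 1), (n - p * (d + 1) + p).choose p =
      Nat.fibChooseSum d n := by
    refine Finset.sum_congr rfl fun p hp => ?_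
    have hle : p * (d + 1) ≤ n :=
      (Nat.le_div_iff_mul_le d.succ_pos).mp (Nat.lt_add_one_iff.mp (Finset.mem_range.mp hp))
    rw [mul_add_one] at hle ⊢
    congr 1
    omega
  have hfib : Nat.fibChooseSum d = G :=
    eq_of_eq_on_lt_of_add_rec hc (fun i hi => (Nat.fibChooseSum_of_lt hi).trans (hinit i hi).symm)
      (fun _ => Nat.fibChooseSum_rec) hrec
  rw [hsum, hfib]
end

section
/- For any integers k ≥ 1 and n ≥ k+1, the number of compositions of n into parts each of size at least k+1 equals G_{n-(k+1)}^{k+1}, the (n-k-1)-th generalized Fibonacci number with parameter k+1. -/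
/-!
A composition of `n + 1` into parts `≥ c` either starts with the part `c`, and removing it leaves a
composition of `n + 1 - c`, or starts with a larger part, and decrementing it leaves a composition
of `n`. This is the recurrence `G m = G (m - 1) + G (m - c)`; for `c ≤ n < 2 * c` the only
composition is `[n]`, which gives the initial values.
-/

theorem List.modifyHead_injective {α : Type*} {f : α → α} (hf : f.Injective) :
    (List.modifyHead f).Injective := by
  rintro (_ | ⟨a, s⟩) (_ | ⟨b, t⟩) h <;> simp_all [hf.eq_iff]

def compositionsAtLeast (c n : ℕ) : Set (List ℕ) := {l | l.sum = n ∧ ∀ x ∈ l, c ≤ x}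

namespace compositionsAtLeast

variable {c n : ℕ}

lemma nil_mem_iff : [] ∈ compositionsAtLeast c n ↔ n = 0 := by
  simp [compositionsAtLeast, eq_comm]

lemma cons_mem_iff {a : ℕ} {l : List ℕ} :
    a :: l ∈ compositionsAtLeast c n ↔ c ≤ a ∧ a ≤ n ∧ l ∈ compositionsAtLeast c (n - a) := by
  simp only [compositionsAtLeast, Set.mem_ofPred_eq, List.sum_cons, List.mem_cons,
    forall_eq_or_imp]
  constructor
  · rintro ⟨hs, hca, hl⟩
    exact ⟨hca, by omega, by omega, hl⟩
  · rintro ⟨hca, han, hs, hl⟩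
    exact ⟨by omega, hca, hl⟩

lemma finite (hc : 0 < c) : (compositionsAtLeast c n).Finite :=
  (Set.finite_range fun x : Composition n => x.blocks).subset fun l hl =>
    ⟨⟨l, fun hx => hc.trans_le (hl.2 _ hx), hl.1⟩, rfl⟩

lemma eq_singleton (hcn : c ≤ n) (hn : n < 2 * c) : compositionsAtLeast c n = {[n]} := by
  ext l
  rcases l with _ | ⟨a, _ | ⟨b, t⟩⟩ <;> simp [nil_mem_iff, cons_mem_iff] <;> omega

lemma succ_eq_union (hc : 0 < c) (hcn : c ≤ n) :
    compositionsAtLeast c (n + 1) =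
      List.modifyHead (· + 1) '' compositionsAtLeast c n ∪
        List.cons c '' compositionsAtLeast c (n + 1 - c) := by
  ext l
  constructor
  · rcases l with _ | ⟨a, t⟩
    · simp [nil_mem_iff]
    rw [cons_mem_iff]
    rintro ⟨hca, han, ht⟩
    rcases hca.eq_or_lt with rfl | hlt
    · exact Or.inr ⟨t, ht, rfl⟩
    · refine Or.inl ⟨(a - 1) :: t, cons_mem_iff.2 ⟨by omega, by omega, ?_⟩, ?_⟩
      · convert ht using 2
        omega
      · simp only [List.modifyHead_cons]
        congr
        omega
  · rintro (⟨_ | ⟨b, s⟩, hl, rfl⟩ | ⟨l, hl, rfl⟩)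
    · rw [nil_mem_iff] at hl
      omega
    · obtain ⟨hcb, hbn, hs⟩ := cons_mem_iff.1 hl
      show (b + 1) :: s ∈ _
      refine cons_mem_iff.2 ⟨by omega, by omega, ?_⟩
      convert hs using 2
      omega
    · exact cons_mem_iff.2 ⟨le_rfl, by omega, hl⟩

lemma disjoint_image_modifyHead_succ_image_cons (m : ℕ) :
    Disjoint (List.modifyHead (· + 1) '' compositionsAtLeast c n)
      (List.cons c '' compositionsAtLeast c m) := by
  rw [Set.disjoint_left]
  rintro _ ⟨_ | ⟨b, s⟩, hl, rfl⟩ ⟨t, -, h⟩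
  · exact List.cons_ne_nil _ _ h
  · rw [List.modifyHead_cons, List.cons.injEq] at h
    have := (cons_mem_iff.1 hl).1
    omega

lemma ncard_succ (hc : 0 < c) (hcn : c ≤ n) :
    (compositionsAtLeast c (n + 1)).ncard =
      (compositionsAtLeast c n).ncard + (compositionsAtLeast c (n + 1 - c)).ncard := by
  rw [succ_eq_union hc hcn, Set.ncard_union_eq (disjoint_image_modifyHead_succ_image_cons _)
      ((finite hc).image _) ((finite hc).image _),
    Set.ncard_image_of_injective _ (List.modifyHead_injective (add_left_injective 1)),
    Set.ncard_image_of_injective _ List.cons_injective]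

theorem ncard_add_eq_of_recurrence (hc : 0 < c) {G : ℕ → ℕ} (hinit : ∀ i < c, G i = 1)
    (hrec : ∀ m, c ≤ m → G m = G (m - 1) + G (m - c)) (m : ℕ) :
    (compositionsAtLeast c (m + c)).ncard = G m := by
  induction m using Nat.strong_induction_on with
  | _ m ih =>
    by_cases hm : m < c
    · rw [eq_singleton (by omega) (by omega), Set.ncard_singleton, hinit m hm]
    have hsucc : m + c = m - 1 + c + 1 := by omega
    have hsub : m - 1 + c + 1 - c = m - c + c := by omega
    rw [hsucc, ncard_succ hc (by omega), hsub, ih (m - 1) (by omega), ih (m - c) (by omega),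
      hrec m (by omega)]

end compositionsAtLeast

theorem numCompositions_eq_generalizedFibonacci_general (k n : ℕ) (hn : k + 1 ≤ n)
    (G : ℕ → ℕ) (hinit : ∀ i < k + 1, G i = 1)
    (hrec : ∀ m, k + 1 ≤ m → G m = G (m - 1) + G (m - (k + 1))) :
    Nat.card {l : List ℕ // l.sum = n ∧ ∀ x ∈ l, k + 1 ≤ x} = G (n - (k + 1)) := by
  obtain ⟨m, rfl⟩ := Nat.exists_eq_add_of_le' hn
  rw [Nat.add_sub_cancel]
  exact (Nat.card_coe_set_eq _).trans
    (compositionsAtLeast.ncard_add_eq_of_recurrence k.succ_pos hinit hrec m)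

/-- The number of compositions of `n` into parts each of size at least `k+1` equals
`G_{n-(k+1)}^{k+1}`, the `(n-k-1)`-th generalized Fibonacci number with parameter `k+1`. -/
theorem numCompositions_eq_generalizedFibonacci (k n : ℕ) (hk : 1 ≤ k) (hn : k + 1 ≤ n)
    (G : ℕ → ℕ) (hinit : ∀ i < k + 1, G i = 1)
    (hrec : ∀ m, k + 1 ≤ m → G m = G (m - 1) + G (m - (k + 1))) :
    Nat.card {l : List ℕ // l.sum = n ∧ ∀ x ∈ l, k + 1 ≤ x} = G (n - (k + 1)) :=
  numCompositions_eq_generalizedFibonacci_general k n hn G hinit hrec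
end

section
/- Let k ≥ 2, let S be the k×k cyclic shift matrix, and let t ∈ {0,1}^k be a binary vector with t_1 = 0 and t_k = 1. Define i = (2S - I)^{-1}(nI + S)t for an integer n ≥ 1. Then the j-th coordinate equals i_j = (α_j · n + β_j)/(2^k - 1) where α_j = Σ_{l=1}^k 2^{(l-j) mod k} t_l and β_j = Σ_{l=1}^k 2^{(l-j-1) mod k} t_l, and moreover 0 < α_j < 2^k - 1 and 0 < β_j < 2^k - 1. -/
/-!
Up to the factor `2 ^ k - 1`, the inverse of `2S - I` is the circulant matrix `C` with
`C i j = 2 ^ ((j - i) mod k)`: row `i` of `2SC` is row `i` of `C` doubled and shifted, which agrees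
with row `i` of `C` except on the diagonal, where `2 · 2 ^ (k - 1) = 1 + (2 ^ k - 1)`. Applying `C`
to `(nI + S) t` gives `n` times the value of the binary word `t` read cyclically from position `j`,
plus its value read from `j + 1`. Such a value lies strictly between `0 = Σ 0` and
`2 ^ k - 1 = Σ 2 ^ m` because `t` has a `1` and a `0` entry.
-/

open Matrix

variable {K : Type*} {k : ℕ}

/-- The binary word `t` read cyclically starting from position `c`. -/
def rotatedBinaryValue [Semiring K] [NeZero k] (t : Fin k → K) (c : Fin k) : K :=
  ∑ l, 2 ^ ((l - c : Fin k) : ℕ) * t l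

def geomCirculant [Semiring K] (k : ℕ) : Matrix (Fin k) (Fin k) K :=
  of fun i j => 2 ^ ((j - i : Fin k) : ℕ)

section CommRing

variable [CommRing K] [NeZero k]

lemma two_mul_two_pow_val_sub_one (x : Fin k) :
    (2 : K) * 2 ^ ((x - 1 : Fin k) : ℕ) = 2 ^ (x : ℕ) + if x = 0 then 2 ^ k - 1 else 0 := by
  obtain ⟨m, rfl⟩ : ∃ m, k = m + 1 := ⟨k - 1, by have := NeZero.ne k; omega⟩
  rw [Fin.coe_sub_one]
  split_ifs with hx
  · subst hx
    rw [Fin.val_zero, pow_succ]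
    ring
  · have hpos : 0 < (x : ℕ) := Fin.pos_iff_ne_zero.mpr hx
    rw [add_zero, ← pow_succ', Nat.sub_add_cancel hpos]

lemma sum_two_pow_val_sub (c : Fin k) :
    ∑ l : Fin k, (2 : K) ^ ((l - c : Fin k) : ℕ) = 2 ^ k - 1 := by
  refine (Fintype.sum_equiv (Equiv.subRight c) _ (fun m => (2 : K) ^ (m : ℕ)) fun _ => rfl).trans ?_
  rw [Fin.sum_univ_eq_sum_range (fun m => (2 : K) ^ m), ← geom_sum_mul]
  norm_num

section Shift

variable {S : Matrix (Fin k) (Fin k) K} (hS : ∀ i j, S i j = if j = i + 1 then 1 else 0)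
include hS

lemma shift_mul_apply (M : Matrix (Fin k) (Fin k) K) (i j : Fin k) :
    (S * M) i j = M (i + 1) j := by
  simp [mul_apply, hS]

lemma shift_mulVec_apply (v : Fin k → K) (i : Fin k) : (S *ᵥ v) i = v (i + 1) := by
  simp [mulVec, dotProduct, hS]

lemma two_smul_shift_sub_one_mul_geomCirculant :
    ((2 : K) • S - 1) * geomCirculant k = (2 ^ k - 1 : K) • (1 : Matrix (Fin k) (Fin k) K) := by
  ext i j
  have hdiff : j - (i + 1) = j - i - 1 := by abel
  rw [sub_mul, Matrix.one_mul, smul_mul, Matrix.sub_apply, Matrix.smul_apply, Matrix.smul_apply,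
    shift_mul_apply hS]
  simp only [geomCirculant, of_apply, smul_eq_mul, hdiff, two_mul_two_pow_val_sub_one,
    sub_eq_zero, one_apply, mul_ite, mul_one, mul_zero, eq_comm (a := j)]
  split_ifs <;> ring

lemma geomCirculant_mulVec_smul_one_add_shift_mulVec (x : K) (t : Fin k → K) (j : Fin k) :
    (geomCirculant k *ᵥ ((x • (1 : Matrix (Fin k) (Fin k) K) + S) *ᵥ t)) j =
      rotatedBinaryValue t j * x + rotatedBinaryValue t (j + 1) := by
  have hv : (x • (1 : Matrix (Fin k) (Fin k) K) + S) *ᵥ t = fun l => t l * x + t (l + 1) := by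
    ext l
    simp [add_mulVec, smul_mulVec, shift_mulVec_apply hS, mul_comm]
  have hreindex : ∑ l, (2 : K) ^ ((l - j : Fin k) : ℕ) * t (l + 1) = rotatedBinaryValue t (j + 1) :=
    Fintype.sum_equiv (Equiv.addRight 1) _ _ fun l => by
      rw [Equiv.coe_addRight, add_sub_add_right_eq_sub]
  rw [hv]
  simp only [mulVec, dotProduct, geomCirculant, of_apply, mul_add, Finset.sum_add_distrib]
  rw [hreindex, rotatedBinaryValue, rotatedBinaryValue, Finset.sum_mul]
  simp only [mul_assoc]

end Shift

end CommRing

lemma inv_two_smul_shift_sub_one [Field K] [NeZero k] {S : Matrix (Fin k) (Fin k) K}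
    (hS : ∀ i j, S i j = if j = i + 1 then 1 else 0) (h2k : (2 : K) ^ k ≠ 1) :
    ((2 : K) • S - 1)⁻¹ = (2 ^ k - 1 : K)⁻¹ • geomCirculant k := by
  apply inv_eq_right_inv
  rw [Matrix.mul_smul, two_smul_shift_sub_one_mul_geomCirculant hS, smul_smul,
    inv_mul_cancel₀ (sub_ne_zero.mpr h2k), one_smul]

section Bounds

variable [CommRing K] [LinearOrder K] [IsStrictOrderedRing K] [NeZero k] {t : Fin k → K}

lemma rotatedBinaryValue_pos (ht : ∀ l, 0 ≤ t l) {a : Fin k} (ha : 0 < t a) (c : Fin k) :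
    0 < rotatedBinaryValue t c :=
  Finset.sum_pos' (fun l _ => mul_nonneg (by positivity) (ht l))
    ⟨a, Finset.mem_univ a, mul_pos (by positivity) ha⟩

lemma rotatedBinaryValue_lt (ht : ∀ l, t l ≤ 1) {b : Fin k} (hb : t b < 1) (c : Fin k) :
    rotatedBinaryValue t c < 2 ^ k - 1 := by
  rw [← sum_two_pow_val_sub c]
  exact Finset.sum_lt_sum (fun l _ => mul_le_of_le_one_right (by positivity) (ht l))
    ⟨b, Finset.mem_univ b, mul_lt_of_lt_one_right (by positivity) hb⟩

end Bounds

/-- With `S` the `k×k` cyclic shift matrix and `t` a 0/1 vector with `t_1 = 0`, `t_k = 1`,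
the vector `i = (2S - I)⁻¹ (nI + S) t` has coordinates
`i_j = (α_j n + β_j)/(2^k - 1)` with `α_j = Σ_l 2^((l-j) mod k) t_l`,
`β_j = Σ_l 2^((l-j-1) mod k) t_l`, and `0 < α_j, β_j < 2^k - 1`. -/
theorem cycle_system_solution (k : ℕ) [NeZero k] (hk : 2 ≤ k) (n : ℕ)
    (t : Fin k → ℚ) (ht : ∀ l, t l = 0 ∨ t l = 1) (ht1 : t 0 = 0)
    (htk : t ⟨k - 1, by omega⟩ = 1)
    (S : Matrix (Fin k) (Fin k) ℚ) (hS : ∀ i j, S i j = if j = i + 1 then 1 else 0)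
    (α β : Fin k → ℚ)
    (hα : ∀ j, α j = ∑ l, 2 ^ ((l - j : Fin k) : ℕ) * t l)
    (hβ : ∀ j, β j = ∑ l, 2 ^ ((l - j - 1 : Fin k) : ℕ) * t l) :
    ∀ j, Matrix.mulVec (((2 : ℚ) • S - 1)⁻¹)
          (Matrix.mulVec ((n : ℚ) • (1 : Matrix (Fin k) (Fin k) ℚ) + S) t) j =
        (α j * n + β j) / (2 ^ k - 1) ∧
      0 < α j ∧ α j < 2 ^ k - 1 ∧ 0 < β j ∧ β j < 2 ^ k - 1 := by
  intro j
  have hαj : α j = rotatedBinaryValue t j := hα j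
  have hβj : β j = rotatedBinaryValue t (j + 1) := by
    simp only [hβ, rotatedBinaryValue, sub_sub]
  have ht_nonneg : ∀ l, 0 ≤ t l := fun l => by rcases ht l with h | h <;> simp [h]
  have ht_le_one : ∀ l, t l ≤ 1 := fun l => by rcases ht l with h | h <;> simp [h]
  have h2k : (2 : ℚ) ^ k ≠ 1 := (one_lt_pow₀ (by norm_num) (NeZero.ne k)).ne'
  have hpos := rotatedBinaryValue_pos ht_nonneg (htk ▸ one_pos)
  have hlt := rotatedBinaryValue_lt ht_le_one (b := 0) (ht1 ▸ one_pos)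
  rw [inv_two_smul_shift_sub_one hS h2k, smul_mulVec, Pi.smul_apply,
    geomCirculant_mulVec_smul_one_add_shift_mulVec hS, hαj, hβj, smul_eq_mul, inv_mul_eq_div]
  exact ⟨rfl, hpos j, hlt j, hpos (j + 1), hlt (j + 1)⟩
end
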